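/- arXiv:math/0503381 — 4 statements merged into one kernel-verified Lean document; each statement's English description precedes it below -/
import Mathlib

section
/- Let f ∈ V, set f̄ := T* f, let ū ∈ H satisfy G ū = f̄, assume G ≠ 0 and let 0 < α* < 2/‖G*G‖. Define the damped Richardson iteration on the normal equations by x₀ := 0 and x_{i+1} := x_i − α*·G*(G x_i − f̄) for i ≥ 0. Then there exists ρ with 0 ≤ ρ < 1 such that ‖P ū − x_i‖ ≤ ρⁱ·‖P ū‖ for all i ≥ 0; in particular the iterates x_i converge in H to P ū. -/
/-!
The error `e = P ubar - x` evolves by `e ↦ e - α* G*G e` and stays in `K = (ker T)ᗮ`, which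
contains `P ubar` and the range of `G*`. On `K` the operator `T` is bounded below by the open
mapping theorem, so coercivity of `B` makes `G` bounded below there, say `β ‖e‖ ≤ ‖G e‖`. Then
`‖e - α* G*G e‖² ≤ (1 - α* (2 - α* ‖G‖²) β²) ‖e‖²`, a strict contraction when `α* ‖G‖² < 2`.
-/

open scoped RealInnerProductSpace
open Filter Topology ContinuousLinearMap

section Contraction

variable {E F : Type*} [NormedAddCommGroup E] [InnerProductSpace ℝ E] [CompleteSpace E]
  [NormedAddCommGroup F] [InnerProductSpace ℝ F] [CompleteSpace F]

theorem norm_sub_smul_adjoint_apply_apply_sq_le (A : E →L[ℝ] F) {s c : ℝ} (hs : 0 ≤ s)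
    (hsA : s * ‖A‖ ^ 2 ≤ 2) {e : E} (he : c * ‖e‖ ≤ ‖A e‖) (hc : 0 ≤ c) :
    ‖e - s • adjoint A (A e)‖ ^ 2 ≤ (1 - s * (2 - s * ‖A‖ ^ 2) * c ^ 2) * ‖e‖ ^ 2 := by
  have hinner : ⟪e, s • adjoint A (A e)⟫ = s * ‖A e‖ ^ 2 := by
    rw [real_inner_smul_right, adjoint_inner_right, real_inner_self_eq_norm_sq]
  have hadj : ‖adjoint A (A e)‖ ≤ ‖A‖ * ‖A e‖ := by
    simpa only [LinearIsometryEquiv.norm_map] using (adjoint A).le_opNorm (A e)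
  have hadj_sq : ‖adjoint A (A e)‖ ^ 2 ≤ ‖A‖ ^ 2 * ‖A e‖ ^ 2 := by
    rw [← mul_pow]; gcongr
  have hlower : c ^ 2 * ‖e‖ ^ 2 ≤ ‖A e‖ ^ 2 := by
    rw [← mul_pow]; gcongr
  rw [norm_sub_sq_real, hinner, norm_smul, mul_pow, Real.norm_eq_abs, sq_abs]
  nlinarith [mul_le_mul_of_nonneg_left hadj_sq (sq_nonneg s),
    mul_le_mul_of_nonneg_left hlower (mul_nonneg hs (sub_nonneg.2 hsA))]

theorem exists_norm_sub_smul_adjoint_apply_apply_le (A : E →L[ℝ] F) {s c : ℝ} (hs : 0 < s)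
    (hsA : s * ‖A‖ ^ 2 < 2) (hc : 0 < c) :
    ∃ ρ : ℝ, 0 ≤ ρ ∧ ρ < 1 ∧
      ∀ e : E, c * ‖e‖ ≤ ‖A e‖ → ‖e - s • adjoint A (A e)‖ ≤ ρ * ‖e‖ := by
  have hδ : 0 < s * (2 - s * ‖A‖ ^ 2) * c ^ 2 := by
    have : 0 < 2 - s * ‖A‖ ^ 2 := by linarith
    positivity
  refine ⟨√(1 - s * (2 - s * ‖A‖ ^ 2) * c ^ 2), Real.sqrt_nonneg _,
    (Real.sqrt_lt' one_pos).2 (by linarith), fun e he => ?_⟩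
  calc ‖e - s • adjoint A (A e)‖ = √(‖e - s • adjoint A (A e)‖ ^ 2) :=
        (Real.sqrt_sq (norm_nonneg _)).symm
    _ ≤ √((1 - s * (2 - s * ‖A‖ ^ 2) * c ^ 2) * ‖e‖ ^ 2) :=
        Real.sqrt_le_sqrt (norm_sub_smul_adjoint_apply_apply_sq_le A hs.le hsA.le he hc.le)
    _ = √(1 - s * (2 - s * ‖A‖ ^ 2) * c ^ 2) * ‖e‖ := by
        rw [Real.sqrt_mul' _ (sq_nonneg _), Real.sqrt_sq (norm_nonneg _)]

end Contraction

theorem mem_and_norm_le_pow_mul_of_mapsTo {E : Type*} [SeminormedAddCommGroup E]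
    {K : Set E} {g : E → E} {ρ : ℝ} (hρ : 0 ≤ ρ) (hgK : Set.MapsTo g K K)
    (hg : ∀ e ∈ K, ‖g e‖ ≤ ρ * ‖e‖) {e : ℕ → E} (he0 : e 0 ∈ K) (he : ∀ i, e (i + 1) = g (e i))
    (i : ℕ) : e i ∈ K ∧ ‖e i‖ ≤ ρ ^ i * ‖e 0‖ := by
  induction i with
  | zero => simp [he0]
  | succ i ih =>
    rw [he i, pow_succ', mul_assoc]
    exact ⟨hgK ih.1, (hg _ ih.1).trans (mul_le_mul_of_nonneg_left ih.2 hρ)⟩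

theorem tendsto_of_norm_sub_le_pow_mul {E : Type*} [SeminormedAddCommGroup E] {x : ℕ → E}
    {y : E} {ρ r : ℝ} (hρ₀ : 0 ≤ ρ) (hρ₁ : ρ < 1) (hx : ∀ i, ‖y - x i‖ ≤ ρ ^ i * r) :
    Tendsto x atTop (𝓝 y) := by
  rw [tendsto_iff_norm_sub_tendsto_zero]
  refine squeeze_zero (fun _ => norm_nonneg _) (fun i => norm_sub_rev (x i) y ▸ hx i) ?_
  simpa using (tendsto_pow_atTop_nhds_zero_of_lt_one hρ₀ hρ₁).mul_const r

theorem mul_norm_le_norm_apply_of_mul_norm_sq_le_inner {E : Type*} [NormedAddCommGroup E]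
    [InnerProductSpace ℝ E] {G : E → E} {c : ℝ} {e : E} (h : c * ‖e‖ ^ 2 ≤ ⟪G e, e⟫) :
    c * ‖e‖ ≤ ‖G e‖ := by
  rcases (norm_nonneg e).eq_or_lt with he | he
  · simp [← he]
  · exact le_of_mul_le_mul_right (by nlinarith [real_inner_le_norm (G e) e]) he

theorem adjoint_apply_mem_orthogonal_ker {E F : Type*} [NormedAddCommGroup E]
    [InnerProductSpace ℝ E] [CompleteSpace E] [AddCommGroup F] [Module ℝ F] {T : E →ₗ[ℝ] F}
    {G : E →L[ℝ] E} (hTG : ∀ z, T z = 0 → G z = 0) (y : E) :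
    adjoint G y ∈ (LinearMap.ker T)ᗮ := by
  rw [Submodule.mem_orthogonal]
  intro z hz
  rw [adjoint_inner_right, hTG z hz, inner_zero_left]

section KernelComplement

variable {V H : Type*} [NormedAddCommGroup V] [InnerProductSpace ℝ V] [CompleteSpace V]
  [NormedAddCommGroup H] [InnerProductSpace ℝ H] [CompleteSpace H]

theorem exists_norm_le_mul_norm_apply_of_mem_orthogonal_ker (T : H →L[ℝ] V)
    (hT : Function.Surjective T) :
    ∃ C > 0, ∀ e ∈ (LinearMap.ker (T : H →ₗ[ℝ] V))ᗮ, ‖e‖ ≤ C * ‖T e‖ := by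
  obtain ⟨C, hC, hpre⟩ := T.exists_preimage_norm_le hT
  refine ⟨C, hC, fun e he => ?_⟩
  obtain ⟨e', he', he'C⟩ := hpre (T e)
  have hker : e' - e ∈ LinearMap.ker (T : H →ₗ[ℝ] V) := by
    simp [LinearMap.mem_ker, he']
  have hpyth : ‖e'‖ * ‖e'‖ = ‖e‖ * ‖e‖ + ‖e' - e‖ * ‖e' - e‖ := by
    simpa using norm_add_sq_eq_norm_sq_add_norm_sq_real
      (Submodule.inner_left_of_mem_orthogonal hker he)
  have hle : ‖e‖ ≤ ‖e'‖ :=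
    (mul_self_le_mul_self_iff (norm_nonneg _) (norm_nonneg _)).2 (by nlinarith)
  exact hle.trans he'C

theorem exists_mul_norm_le_norm_adjoint_comp_comp_apply (B : V →L[ℝ] V) {α : ℝ} (hα : 0 < α)
    (hB : ∀ v : V, α * ‖v‖ ^ 2 ≤ ⟪B v, v⟫) (T : H →L[ℝ] V) (hT : Function.Surjective T) :
    ∃ β > 0, ∀ e ∈ (LinearMap.ker (T : H →ₗ[ℝ] V))ᗮ,
      β * ‖e‖ ≤ ‖(adjoint T).comp (B.comp T) e‖ := by
  obtain ⟨C, hC, hTe⟩ := exists_norm_le_mul_norm_apply_of_mem_orthogonal_ker T hT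
  refine ⟨α / C ^ 2, by positivity, fun e he => mul_norm_le_norm_apply_of_mul_norm_sq_le_inner ?_⟩
  calc α / C ^ 2 * ‖e‖ ^ 2 ≤ α / C ^ 2 * (C * ‖T e‖) ^ 2 := by gcongr; exact hTe e he
    _ = α * ‖T e‖ ^ 2 := by field_simp
    _ ≤ ⟪B (T e), T e⟫ := hB (T e)
    _ = ⟪(adjoint T).comp (B.comp T) e, e⟫ := (adjoint_inner_left T e (B (T e))).symm

end KernelComplement

theorem richardson_iteration_converges_general
    {V H : Type*} [NormedAddCommGroup V] [InnerProductSpace ℝ V] [CompleteSpace V]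
    [NormedAddCommGroup H] [InnerProductSpace ℝ H] [CompleteSpace H]
    (B : V →L[ℝ] V) (α : ℝ) (hα : 0 < α)
    (hB : ∀ v : V, α * ‖v‖ ^ 2 ≤ ⟪B v, v⟫)
    (T : H →L[ℝ] V) (hT : Function.Surjective T)
    (G : H →L[ℝ] H) (hG : G = (ContinuousLinearMap.adjoint T).comp (B.comp T))
    (G₂ : H →L[ℝ] H) (hG₂ : G₂ = (ContinuousLinearMap.adjoint G).comp G)
    (P : H →L[ℝ] H)
    (hP : ∀ x : H, P x ∈ (LinearMap.ker (T : H →ₗ[ℝ] V))ᗮ ∧ x - P x ∈ LinearMap.ker (T : H →ₗ[ℝ] V))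
    (αs : ℝ) (hαs : 0 < αs) (hαs' : αs < 2 / ‖G₂‖)
    (f : V) (ubar : H) (hubar : G ubar = ContinuousLinearMap.adjoint T f) :
    ∃ ρ : ℝ, 0 ≤ ρ ∧ ρ < 1 ∧
      ∀ x : ℕ → H, x 0 = 0 →
        (∀ i : ℕ, x (i + 1) = x i - αs •
          (ContinuousLinearMap.adjoint G (G (x i) - ContinuousLinearMap.adjoint T f))) →
        (∀ i : ℕ, ‖P ubar - x i‖ ≤ ρ ^ i * ‖P ubar‖) ∧
        Tendsto x atTop (𝓝 (P ubar)) := by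
  set K := (LinearMap.ker (T : H →ₗ[ℝ] V))ᗮ
  obtain ⟨β, hβ, hGβ⟩ := exists_mul_norm_le_norm_adjoint_comp_comp_apply B hα hB T hT
  rw [← hG] at hGβ
  have hαsG : αs * ‖G‖ ^ 2 < 2 := by
    rw [sq, ← norm_adjoint_comp_self, ← hG₂]
    rcases (norm_nonneg G₂).eq_or_lt with h | h
    · simp [← h]
    · exact (lt_div_iff₀ h).1 hαs'
  obtain ⟨ρ, hρ₀, hρ₁, hρ⟩ := exists_norm_sub_smul_adjoint_apply_apply_le G hαs hαsG hβ
  have hTG : ∀ z, T z = 0 → G z = 0 := fun z hz => by simp [hG, hz]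
  have hGPubar : G (P ubar) = adjoint T f := by
    rw [← hubar, eq_comm, ← sub_eq_zero, ← map_sub]
    exact hTG _ (hP ubar).2
  refine ⟨ρ, hρ₀, hρ₁, fun x hx0 hx => ?_⟩
  have hstep : ∀ i, P ubar - x (i + 1) =
      (P ubar - x i) - αs • adjoint G (G (P ubar - x i)) := fun i => by
    simp only [hx i, ← hGPubar, map_sub]
    module
  have hmaps : Set.MapsTo (fun e => e - αs • adjoint G (G e)) K K := fun e he =>
    K.sub_mem he (K.smul_mem _ (adjoint_apply_mem_orthogonal_ker hTG _))
  have herr : ∀ i, ‖P ubar - x i‖ ≤ ρ ^ i * ‖P ubar‖ := fun i => by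
    simpa [hx0] using (mem_and_norm_le_pow_mul_of_mapsTo (e := fun i => P ubar - x i) hρ₀
      hmaps (fun e he => hρ e (hGβ e he)) (by simpa [hx0] using (hP ubar).1) hstep i).2
  exact ⟨herr, tendsto_of_norm_sub_le_pow_mul hρ₀ hρ₁ herr⟩

/-- The damped Richardson iteration on the normal equations,
`x₀ = 0`, `x_{i+1} = x_i − α* G*(G x_i − T* f)`, converges linearly to `P ubar`,
where `ubar` is any solution of `G ubar = T* f`. -/
theorem richardson_iteration_converges
    {V H : Type*} [NormedAddCommGroup V] [InnerProductSpace ℝ V] [CompleteSpace V]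
    [NormedAddCommGroup H] [InnerProductSpace ℝ H] [CompleteSpace H]
    (B : V →L[ℝ] V) (α : ℝ) (hα : 0 < α)
    (hB : ∀ v : V, α * ‖v‖ ^ 2 ≤ ⟪B v, v⟫)
    (T : H →L[ℝ] V) (hT : Function.Surjective T)
    (G : H →L[ℝ] H) (hG : G = (ContinuousLinearMap.adjoint T).comp (B.comp T))
    (G₂ : H →L[ℝ] H) (hG₂ : G₂ = (ContinuousLinearMap.adjoint G).comp G)
    (P : H →L[ℝ] H)
    (hP : ∀ x : H, P x ∈ (LinearMap.ker (T : H →ₗ[ℝ] V))ᗮ ∧ x - P x ∈ LinearMap.ker (T : H →ₗ[ℝ] V))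
    (hGne : G ≠ 0)
    (αs : ℝ) (hαs : 0 < αs) (hαs' : αs < 2 / ‖G₂‖)
    (f : V) (ubar : H) (hubar : G ubar = ContinuousLinearMap.adjoint T f) :
    ∃ ρ : ℝ, 0 ≤ ρ ∧ ρ < 1 ∧
      ∀ x : ℕ → H, x 0 = 0 →
        (∀ i : ℕ, x (i + 1) = x i - αs •
          (ContinuousLinearMap.adjoint G (G (x i) - ContinuousLinearMap.adjoint T f))) →
        (∀ i : ℕ, ‖P ubar - x i‖ ≤ ρ ^ i * ‖P ubar‖) ∧
        Tendsto x atTop (𝓝 (P ubar)) :=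
  richardson_iteration_converges_general B α hα hB T hT G hG G₂ hG₂ P hP αs hαs hαs' f ubar hubar
end

section
/- Suppose ‖l̄‖ < c²/(4‖T‖³‖A₁‖), let r* with 0 < r* < c/(2‖T‖³‖A₁‖) satisfy ‖l̄‖ ≤ r*·(c − ‖A₁‖·‖T‖³·r*), and let ū be the unique element of (ker T)⊥ with ‖ū‖ ≤ r* and G ū + G₁(ū) = l̄. Then for every sequence (ū_n)_{n≥0} in H with ū₀ = 0 and, for all n ≥ 0, ū_{n+1} ∈ (ker T)⊥ and G ū_{n+1} = l̄ − G₁(ū_n) (the exact discrete fixed point iteration ū_{n+1} = 𝐇(ū_n)), the sequence ū_n converges in H to ū. -/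
open scoped RealInnerProductSpace
open Filter Topology

/-!
The map `𝐇(u) = G⁻¹ (l̄ - G₁ u)` on `Ran G` is a contraction on the ball of radius `r*`:
the quadratic term satisfies `‖G₁ u - G₁ v‖ ≤ ‖A₁‖ ‖T‖³ (‖u‖ + ‖v‖) ‖u - v‖`, so the condition
on `‖l̄‖` keeps the iterates in the ball, and on that ball `𝐇` has Lipschitz constant
`2 ‖A₁‖ ‖T‖³ r* / c < 1`. The iterates therefore converge geometrically to the fixed point `ū`.
-/

theorem tendsto_of_norm_sub_le_mul {E : Type*} [SeminormedAddCommGroup E] {s : ℕ → E} {u : E}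
    {q : ℝ} (hq₀ : 0 ≤ q) (hq₁ : q < 1) (hs : ∀ n, ‖s (n + 1) - u‖ ≤ q * ‖s n - u‖) :
    Tendsto s atTop (𝓝 u) := by
  have hgeom : ∀ n, ‖s n - u‖ ≤ ‖s 0 - u‖ * q ^ n := by
    intro n
    induction n with
    | zero => simp
    | succ n ih =>
      calc ‖s (n + 1) - u‖ ≤ q * ‖s n - u‖ := hs n
        _ ≤ q * (‖s 0 - u‖ * q ^ n) := by gcongr
        _ = ‖s 0 - u‖ * q ^ (n + 1) := by ring
  rw [tendsto_iff_norm_sub_tendsto_zero]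
  refine squeeze_zero (fun _ ↦ norm_nonneg _) hgeom ?_
  simpa using (tendsto_pow_atTop_nhds_zero_of_lt_one hq₀ hq₁).const_mul ‖s 0 - u‖

section Quadratic

variable {𝕜 E E' F F' : Type*} [NontriviallyNormedField 𝕜]
  [SeminormedAddCommGroup E] [NormedSpace 𝕜 E] [SeminormedAddCommGroup E'] [NormedSpace 𝕜 E']
  [SeminormedAddCommGroup F] [NormedSpace 𝕜 F] [SeminormedAddCommGroup F'] [NormedSpace 𝕜 F']

theorem ContinuousLinearMap.norm_apply_self_sub_apply_self_le (A : E →L[𝕜] E →L[𝕜] F)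
    (x y : E) : ‖A x x - A y y‖ ≤ ‖A‖ * (‖x‖ + ‖y‖) * ‖x - y‖ := by
  have hsplit : A x x - A y y = A (x - y) x + A y (x - y) := by
    simp only [map_sub, sub_apply]
    abel
  calc ‖A x x - A y y‖ ≤ ‖A (x - y) x‖ + ‖A y (x - y)‖ := hsplit ▸ norm_add_le _ _
    _ ≤ ‖A‖ * ‖x - y‖ * ‖x‖ + ‖A‖ * ‖y‖ * ‖x - y‖ :=
      add_le_add (A.le_opNorm₂ _ _) (A.le_opNorm₂ _ _)
    _ = ‖A‖ * (‖x‖ + ‖y‖) * ‖x - y‖ := by ring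

theorem ContinuousLinearMap.norm_comp_apply_self_sub_le (S : F →L[𝕜] F')
    (A : E →L[𝕜] E →L[𝕜] F) (T : E' →L[𝕜] E) (u v : E') :
    ‖S (A (T u) (T u)) - S (A (T v) (T v))‖ ≤ ‖S‖ * ‖A‖ * ‖T‖ ^ 2 * (‖u‖ + ‖v‖) * ‖u - v‖ := by
  calc ‖S (A (T u) (T u)) - S (A (T v) (T v))‖
      ≤ ‖S‖ * ‖A (T u) (T u) - A (T v) (T v)‖ := by rw [← map_sub]; exact S.le_opNorm _
    _ ≤ ‖S‖ * (‖A‖ * (‖T u‖ + ‖T v‖) * ‖T u - T v‖) := by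
      gcongr; exact A.norm_apply_self_sub_apply_self_le _ _
    _ ≤ ‖S‖ * (‖A‖ * (‖T‖ * ‖u‖ + ‖T‖ * ‖v‖) * (‖T‖ * ‖u - v‖)) := by
      rw [← map_sub]; gcongr <;> exact T.le_opNorm _
    _ = ‖S‖ * ‖A‖ * ‖T‖ ^ 2 * (‖u‖ + ‖v‖) * ‖u - v‖ := by ring

end Quadratic

section FixedPointIteration

variable {H : Type*} [SeminormedAddCommGroup H]

/-- For `P = Ran G` this is the exact iteration `s_{n+1} = 𝐇(sₙ)` started at `0`. -/
def IsFixedPointIteration (G : H →+ H) (P : AddSubgroup H) (N : H → H) (l : H) (s : ℕ → H) :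
    Prop :=
  s 0 = 0 ∧ ∀ n, s (n + 1) ∈ P ∧ G (s (n + 1)) = l - N (s n)

variable {G : H →+ H} {P : AddSubgroup H} {c L r : ℝ} {N : H → H} {l u : H} {s : ℕ → H}

theorem norm_le_of_quadratic_bound (hN₀ : N 0 = 0)
    (hN : ∀ u v, ‖N u - N v‖ ≤ L * (‖u‖ + ‖v‖) * ‖u - v‖) (x : H) : ‖N x‖ ≤ L * ‖x‖ ^ 2 := by
  simpa [hN₀, sq, mul_assoc] using hN x 0

theorem IsFixedPointIteration.norm_le (hs : IsFixedPointIteration G P N l s) (hc : 0 < c)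
    (hG : ∀ x ∈ P, c * ‖x‖ ≤ ‖G x‖) (hN₀ : N 0 = 0)
    (hN : ∀ u v, ‖N u - N v‖ ≤ L * (‖u‖ + ‖v‖) * ‖u - v‖) (hL : 0 ≤ L) (hr : 0 ≤ r)
    (hl : ‖l‖ ≤ r * (c - L * r)) (n : ℕ) : ‖s n‖ ≤ r := by
  induction n with
  | zero => simpa [hs.1] using hr
  | succ n ih =>
    have hNs : L * ‖s n‖ ^ 2 ≤ L * r ^ 2 := by gcongr
    have : c * ‖s (n + 1)‖ ≤ c * r :=
      calc c * ‖s (n + 1)‖ ≤ ‖l - N (s n)‖ := (hs.2 n).2 ▸ hG _ (hs.2 n).1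
        _ ≤ ‖l‖ + ‖N (s n)‖ := norm_sub_le _ _
        _ ≤ ‖l‖ + L * ‖s n‖ ^ 2 := by gcongr; exact norm_le_of_quadratic_bound hN₀ hN _
        _ ≤ c * r := by nlinarith
    exact le_of_mul_le_mul_left this hc

theorem mul_norm_sub_fixedPoint_le (hG : ∀ x ∈ P, c * ‖x‖ ≤ ‖G x‖)
    (hN : ∀ u v, ‖N u - N v‖ ≤ L * (‖u‖ + ‖v‖) * ‖u - v‖) (hL : 0 ≤ L)
    (hu : u ∈ P) (hur : ‖u‖ ≤ r) (hGu : G u + N u = l) {x y : H} (hy : y ∈ P)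
    (hGy : G y = l - N x) (hxr : ‖x‖ ≤ r) : c * ‖y - u‖ ≤ 2 * L * r * ‖x - u‖ := by
  have hGyu : G (y - u) = N u - N x := by
    rw [map_sub, hGy, ← hGu]
    abel
  calc c * ‖y - u‖ ≤ ‖N u - N x‖ := hGyu ▸ hG _ (P.sub_mem hy hu)
    _ ≤ L * (‖u‖ + ‖x‖) * ‖x - u‖ := norm_sub_rev x u ▸ hN u x
    _ ≤ L * (r + r) * ‖x - u‖ := by gcongr
    _ = 2 * L * r * ‖x - u‖ := by ring

theorem IsFixedPointIteration.tendsto (hs : IsFixedPointIteration G P N l s) (hc : 0 < c)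
    (hG : ∀ x ∈ P, c * ‖x‖ ≤ ‖G x‖) (hN₀ : N 0 = 0)
    (hN : ∀ u v, ‖N u - N v‖ ≤ L * (‖u‖ + ‖v‖) * ‖u - v‖) (hL : 0 ≤ L) (hr : 0 ≤ r)
    (hl : ‖l‖ ≤ r * (c - L * r)) (hLr : 2 * L * r < c) (hu : u ∈ P) (hur : ‖u‖ ≤ r)
    (hGu : G u + N u = l) : Tendsto s atTop (𝓝 u) := by
  refine tendsto_of_norm_sub_le_mul (q := 2 * L * r / c) (by positivity)
    ((div_lt_one hc).2 hLr) fun n ↦ ?_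
  rw [div_mul_eq_mul_div, le_div_iff₀ hc, mul_comm]
  exact mul_norm_sub_fixedPoint_le hG hN hL hu hur hGu (hs.2 n).1 (hs.2 n).2
    (hs.norm_le hc hG hN₀ hN hL hr hl n)

end FixedPointIteration

theorem discrete_fixed_point_iteration_converges_general
    {V H : Type*} [NormedAddCommGroup V] [InnerProductSpace ℝ V] [CompleteSpace V]
    [NormedAddCommGroup H] [InnerProductSpace ℝ H] [CompleteSpace H]
    (T : H →L[ℝ] V)
    (G : H →L[ℝ] H)
    (c : ℝ) (hc : 0 < c) (hcG : ∀ x ∈ (LinearMap.ker (T : H →ₗ[ℝ] V))ᗮ, c * ‖x‖ ≤ ‖G x‖)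
    (A₁ : V →L[ℝ] V →L[ℝ] V)
    (G₁ : H → H) (hG₁ : ∀ x : H, G₁ x = ContinuousLinearMap.adjoint T (A₁ (T x) (T x)))
    (lbar : H)
    (rs : ℝ) (hrs : 0 < rs) (hrs' : rs < c / (2 * ‖T‖ ^ 3 * ‖A₁‖))
    (hlrs : ‖lbar‖ ≤ rs * (c - ‖A₁‖ * ‖T‖ ^ 3 * rs))
    (ubar : H) (hubar : ubar ∈ (LinearMap.ker (T : H →ₗ[ℝ] V))ᗮ ∧ ‖ubar‖ ≤ rs ∧ G ubar + G₁ ubar = lbar) :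
    ∀ s : ℕ → H, s 0 = 0 →
      (∀ n : ℕ, s (n + 1) ∈ (LinearMap.ker (T : H →ₗ[ℝ] V))ᗮ ∧ G (s (n + 1)) = lbar - G₁ (s n)) →
      Tendsto s atTop (𝓝 ubar) := by
  intro s hs₀ hs
  have hG₁₀ : G₁ 0 = 0 := by simp [hG₁]
  have hG₁_sub (u v : H) : ‖G₁ u - G₁ v‖ ≤ ‖A₁‖ * ‖T‖ ^ 3 * (‖u‖ + ‖v‖) * ‖u - v‖ := by
    rw [hG₁, hG₁]
    convert (ContinuousLinearMap.adjoint T).norm_comp_apply_self_sub_le A₁ T u v using 1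
    rw [ContinuousLinearMap.adjoint.norm_map]
    ring
  have hLr : 2 * (‖A₁‖ * ‖T‖ ^ 3) * rs < c := by
    rcases (by positivity : 0 ≤ 2 * ‖T‖ ^ 3 * ‖A₁‖).eq_or_lt with h | h
    · -- `hrs'` then reads `rs < c / 0 = 0`
      rw [← h, div_zero] at hrs'
      linarith
    · rw [lt_div_iff₀ h] at hrs'
      linarith
  exact IsFixedPointIteration.tendsto (G := G.toLinearMap.toAddMonoidHom)
    (P := (LinearMap.ker (T : H →ₗ[ℝ] V))ᗮ.toAddSubgroup) ⟨hs₀, hs⟩ hc hcG hG₁₀ hG₁_sub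
    (by positivity) hrs.le hlrs hLr hubar.1 hubar.2.1 hubar.2.2

/-- The exact discrete fixed point iteration `ū₀ = 0`, `G ū_{n+1} = l̄ − G₁(ū_n)` with
`ū_{n+1} ∈ Ran G = (ker T)ᗮ` converges to the unique solution `ū ∈ 𝐁_{r*}` of the
discrete nonlinear problem `G ū + G₁(ū) = l̄`. -/
theorem discrete_fixed_point_iteration_converges
    {V H : Type*} [NormedAddCommGroup V] [InnerProductSpace ℝ V] [CompleteSpace V]
    [NormedAddCommGroup H] [InnerProductSpace ℝ H] [CompleteSpace H]
    (B : V →L[ℝ] V) (α : ℝ) (hα : 0 < α)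
    (hB : ∀ v : V, α * ‖v‖ ^ 2 ≤ ⟪B v, v⟫)
    (T : H →L[ℝ] V) (hT : Function.Surjective T)
    (G : H →L[ℝ] H) (hG : G = (ContinuousLinearMap.adjoint T).comp (B.comp T))
    (c : ℝ) (hc : 0 < c) (hcG : ∀ x ∈ (LinearMap.ker (T : H →ₗ[ℝ] V))ᗮ, c * ‖x‖ ≤ ‖G x‖)
    (A₁ : V →L[ℝ] V →L[ℝ] V) (hA₁ : ‖A₁‖ ≠ 0)
    (G₁ : H → H) (hG₁ : ∀ x : H, G₁ x = ContinuousLinearMap.adjoint T (A₁ (T x) (T x)))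
    (lbar : H) (hlbar : lbar ∈ LinearMap.range (ContinuousLinearMap.adjoint T : V →ₗ[ℝ] H))
    (hl : ‖lbar‖ < c ^ 2 / (4 * ‖T‖ ^ 3 * ‖A₁‖))
    (rs : ℝ) (hrs : 0 < rs) (hrs' : rs < c / (2 * ‖T‖ ^ 3 * ‖A₁‖))
    (hlrs : ‖lbar‖ ≤ rs * (c - ‖A₁‖ * ‖T‖ ^ 3 * rs))
    (ubar : H) (hubar : ubar ∈ (LinearMap.ker (T : H →ₗ[ℝ] V))ᗮ ∧ ‖ubar‖ ≤ rs ∧ G ubar + G₁ ubar = lbar)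
    (hunique : ∀ u : H,
      u ∈ (LinearMap.ker (T : H →ₗ[ℝ] V))ᗮ → ‖u‖ ≤ rs → G u + G₁ u = lbar → u = ubar) :
    ∀ s : ℕ → H, s 0 = 0 →
      (∀ n : ℕ, s (n + 1) ∈ (LinearMap.ker (T : H →ₗ[ℝ] V))ᗮ ∧ G (s (n + 1)) = lbar - G₁ (s n)) →
      Tendsto s atTop (𝓝 ubar) :=
  discrete_fixed_point_iteration_converges_general T G c hc hcG A₁ G₁ hG₁ lbar rs hrs hrs' hlrs ubar
    hubar
end

section
/- (Stability of the inexact fixed point iteration.) Suppose ‖l̄‖ < c²/(4‖T‖³‖A₁‖); let r* with 0 < r* < c/(2‖T‖³‖A₁‖) and set L := 2 r* ‖T‖³ ‖A₁‖ / c (so 0 < L < 1). Let (ε_k)_{k≥0} be nonnegative real numbers and let (v_n)_{n≥0} be a sequence in H with v₀ = 0 such that, for every n ≥ 0, the unique element h_n ∈ (ker T)⊥ with G h_n = l̄ − G₁(v_n) satisfies ‖P v_{n+1} − h_n‖ ≤ ε_{n+1}, and additionally ‖P v₁ − h₀‖ ≤ ε₀. Assume that for every n ≥ 0 the quantity ℰ_n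 := Σ_{k=2}^{n+1} ε_k + (1+L)·Σ_{h=0}^{n−3} Σ_{k=3}^{n−h} ε_k·L^{n−h−k} + (ε₁ + L·(ε₀ + ‖l̄‖/c))·Σ_{k=0}^{n−1} Lᵏ + ε₀ + ‖l̄‖/c (sums over empty index ranges being zero) satisfies ℰ_n ≤ r*. Then ‖P v_n‖ ≤ r* for every n ≥ 1; that is, the sequence (P v_n) lies in the ball 𝐁_{r*} = {u ∈ Ran G : ‖u‖ ≤ r*}. -/
open scoped RealInnerProductSpace

/-!
Write `K = ‖T‖³‖A₁‖` and `β = ‖l̄‖/c`. Since `T (P x) = T x`, the nonlinearity satisfies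
`‖G₁ x‖ ≤ K ‖P x‖²`, and the lower bound `c` for `G` on `(ker T)ᗮ` gives
`‖h_n‖ ≤ β + K ‖P v_n‖² / c`. As long as `‖P v_n‖ ≤ r*`, the quadratic term is at most
`L ‖P v_n‖`, so `‖P v_{n+1}‖ ≤ ε_{n+1} + β + L ‖P v_n‖`. The bounds `ℰ_n` are built so that
`ε_{n+2} + β + L ℰ_n ≤ ℰ_{n+1}` (this uses `L ≤ 1`), and an induction then gives
`‖P v_{n+1}‖ ≤ ℰ_n ≤ r*`.
-/

section Operators

variable {V H : Type*} [NormedAddCommGroup V] [InnerProductSpace ℝ V]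
  [NormedAddCommGroup H] [InnerProductSpace ℝ H]

/-- Lax–Milgram, for the bilinear form `(u, w) ↦ ⟪B u, w⟫`. -/
theorem ContinuousLinearMap.surjective_of_coercive [CompleteSpace V] {B : V →L[ℝ] V} {α : ℝ}
    (hα : 0 < α) (hB : ∀ v : V, α * ‖v‖ ^ 2 ≤ ⟪B v, v⟫) : Function.Surjective B := by
  have hb : IsCoercive ((innerSL ℝ).comp B) :=
    ⟨α, hα, fun u => by simpa [sq, mul_assoc] using hB u⟩
  intro y
  obtain ⟨x, hx⟩ := hb.continuousLinearEquivOfBilin.surjective y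
  exact ⟨x, (hb.unique_continuousLinearEquivOfBilin fun _ => rfl).trans hx⟩

theorem ContinuousLinearMap.exists_mem_orthogonal_ker_apply_eq [CompleteSpace H]
    {T : H →L[ℝ] V} (hT : Function.Surjective T) (u : V) :
    ∃ h ∈ (LinearMap.ker (T : H →ₗ[ℝ] V))ᗮ, T h = u := by
  obtain ⟨x, rfl⟩ := hT u
  set K := LinearMap.ker (T : H →ₗ[ℝ] V)
  refine ⟨x - K.starProjection x, K.sub_starProjection_mem_orthogonal x, ?_⟩
  rw [map_sub, sub_eq_self]
  exact K.starProjection_apply_mem x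

theorem ContinuousLinearMap.exists_mem_orthogonal_ker_adjoint_apply_eq
    [CompleteSpace V] [CompleteSpace H] {T : H →L[ℝ] V} (hT : Function.Surjective T)
    {B : V →L[ℝ] V} (hB : Function.Surjective B) {w : H}
    (hw : w ∈ LinearMap.range (ContinuousLinearMap.adjoint T : V →ₗ[ℝ] H)) :
    ∃ h ∈ (LinearMap.ker (T : H →ₗ[ℝ] V))ᗮ, ContinuousLinearMap.adjoint T (B (T h)) = w := by
  obtain ⟨y, rfl⟩ := hw
  obtain ⟨u, rfl⟩ := hB y
  obtain ⟨h, hker, rfl⟩ := T.exists_mem_orthogonal_ker_apply_eq hT u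
  exact ⟨h, hker, rfl⟩

theorem ContinuousLinearMap.norm_adjoint_apply_bilin_le [CompleteSpace V] [CompleteSpace H]
    (T : H →L[ℝ] V) (A₁ : V →L[ℝ] V →L[ℝ] V) (x : H) :
    ‖ContinuousLinearMap.adjoint T (A₁ (T x) (T x))‖ ≤ ‖T‖ ^ 3 * ‖A₁‖ * ‖x‖ ^ 2 :=
  calc ‖ContinuousLinearMap.adjoint T (A₁ (T x) (T x))‖
      ≤ ‖T‖ * (‖A₁‖ * ‖T x‖ * ‖T x‖) := by
        rw [← ContinuousLinearMap.adjoint.norm_map T]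
        exact (ContinuousLinearMap.adjoint T).le_opNorm_of_le (A₁.le_opNorm₂ _ _)
    _ ≤ ‖T‖ * (‖A₁‖ * (‖T‖ * ‖x‖) * (‖T‖ * ‖x‖)) := by gcongr <;> exact T.le_opNorm x
    _ = ‖T‖ ^ 3 * ‖A₁‖ * ‖x‖ ^ 2 := by ring

end Operators

section AccumulatedPerturbation

open Finset

variable {ε : ℕ → ℝ} {L : ℝ}

def tailSum (ε : ℕ → ℝ) (L : ℝ) (n : ℕ) : ℝ :=
  ∑ h ∈ range (n - 2), ∑ k ∈ Icc 3 (n - h), ε k * L ^ (n - h - k)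

/-- The bound `ℰ_n`, with `β` standing for `‖l̄‖ / c`. -/
def accumulatedPerturbation (ε : ℕ → ℝ) (L β : ℝ) (n : ℕ) : ℝ :=
  (∑ k ∈ Icc 2 (n + 1), ε k) + (1 + L) * tailSum ε L n +
    (ε 1 + L * (ε 0 + β)) * (∑ k ∈ range n, L ^ k) + ε 0 + β

theorem tailSum_nonneg (hε : ∀ k, 0 ≤ ε k) (hL : 0 ≤ L) (n : ℕ) : 0 ≤ tailSum ε L n :=
  sum_nonneg fun _ _ => sum_nonneg fun k _ => mul_nonneg (hε k) (pow_nonneg hL _)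

theorem mul_tailSum_le_tailSum_succ (hε : ∀ k, 0 ≤ ε k) (hL : 0 ≤ L) (n : ℕ) :
    L * tailSum ε L n ≤ tailSum ε L (n + 1) := by
  have hterm : ∀ k j, 0 ≤ ε k * L ^ j := fun k _ => mul_nonneg (hε k) (pow_nonneg hL _)
  calc L * tailSum ε L n
      = ∑ h ∈ range (n - 2), ∑ k ∈ Icc 3 (n - h), ε k * L ^ (n + 1 - h - k) := by
        rw [tailSum, mul_sum]
        refine sum_congr rfl fun h hh => ?_
        rw [mul_sum]
        refine sum_congr rfl fun k hk => ?_
        rw [mem_range] at hh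
        rw [mem_Icc] at hk
        rw [show n + 1 - h - k = n - h - k + 1 by omega, pow_succ]
        ring
    _ ≤ ∑ h ∈ range (n - 2), ∑ k ∈ Icc 3 (n + 1 - h), ε k * L ^ (n + 1 - h - k) :=
        sum_le_sum fun h _ => sum_le_sum_of_subset_of_nonneg
          (Icc_subset_Icc_right (by omega)) fun k _ _ => hterm k _
    _ ≤ tailSum ε L (n + 1) :=
        sum_le_sum_of_subset_of_nonneg (range_subset_range.mpr (by omega)) fun h _ _ =>
          sum_nonneg fun k _ => hterm k _

theorem accumulatedPerturbation_zero (ε : ℕ → ℝ) (L β : ℝ) :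
    accumulatedPerturbation ε L β 0 = ε 0 + β := by
  simp [accumulatedPerturbation, tailSum]

theorem add_mul_accumulatedPerturbation_le (hε : ∀ k, 0 ≤ ε k) (hL₀ : 0 ≤ L) (hL₁ : L ≤ 1)
    (β : ℝ) (n : ℕ) :
    ε (n + 2) + β + L * accumulatedPerturbation ε L β n ≤
      accumulatedPerturbation ε L β (n + 1) := by
  have hhead : ∑ k ∈ Icc 2 (n + 1 + 1), ε k = (∑ k ∈ Icc 2 (n + 1), ε k) + ε (n + 2) :=
    sum_Icc_succ_top (by omega) ε
  have hhead_nonneg : 0 ≤ ∑ k ∈ Icc 2 (n + 1), ε k := sum_nonneg fun k _ => hε k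
  have htail := mul_tailSum_le_tailSum_succ hε hL₀ n
  have htail_nonneg := tailSum_nonneg hε hL₀ n
  unfold accumulatedPerturbation
  rw [hhead, geom_sum_succ]
  linarith [mul_le_mul_of_nonneg_left hhead_nonneg (sub_nonneg.mpr hL₁),
    mul_le_mul_of_nonneg_left htail (by linarith : (0 : ℝ) ≤ 1 + L),
    mul_nonneg hL₀ htail_nonneg, hε 0, hε 1]

end AccumulatedPerturbation

theorem mul_div_le_one_of_lt_div {r K c : ℝ} (hc : 0 < c) (hK : 0 ≤ K) (hr : r < c / K) :
    r * K / c ≤ 1 := by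
  rw [div_le_one hc]
  rcases hK.eq_or_lt with rfl | hKpos
  · rw [mul_zero]; exact hc.le
  · exact ((lt_div_iff₀ hKpos).mp hr).le

theorem add_mul_sq_div_le {l K a r c : ℝ} (hK : 0 ≤ K) (hc : 0 ≤ c) (ha : 0 ≤ a) (har : a ≤ r) :
    (l + K * a ^ 2) / c ≤ l / c + 2 * r * K / c * a := by
  rw [div_mul_eq_mul_div, ← add_div]
  refine div_le_div_of_nonneg_right ?_ hc
  nlinarith [mul_nonneg (mul_nonneg hK ha) (sub_nonneg.mpr har)]

/-- The induction keeps `a n ≤ E n ≤ r`, so the step bound, valid only below `r`, always applies. -/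
theorem le_of_step_le_of_le_step {a b E : ℕ → ℝ} {L r : ℝ} (hL : 0 ≤ L) (hEr : ∀ n, E n ≤ r)
    (hE : ∀ n, b n + L * E n ≤ E (n + 1)) (ha₀ : a 0 ≤ E 0)
    (ha : ∀ n, a n ≤ r → a (n + 1) ≤ b n + L * a n) (n : ℕ) : a n ≤ E n := by
  induction n with
  | zero => exact ha₀
  | succ n ih =>
    calc a (n + 1) ≤ b n + L * a n := ha n (ih.trans (hEr n))
      _ ≤ b n + L * E n := by gcongr
      _ ≤ E (n + 1) := hE n

theorem norm_le_add_div_of_forall_norm_sub_le {E F : Type*} [SeminormedAddCommGroup E]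
    [SeminormedAddCommGroup F] {S : Set E} {G : E → F} {c δ : ℝ} (hc : 0 < c)
    (hcG : ∀ x ∈ S, c * ‖x‖ ≤ ‖G x‖) {w : F} {y : E} (hw : ∃ h ∈ S, G h = w)
    (hy : ∀ h ∈ S, G h = w → ‖y - h‖ ≤ δ) : ‖y‖ ≤ δ + ‖w‖ / c := by
  obtain ⟨h, hS, rfl⟩ := hw
  have hh : ‖h‖ ≤ ‖G h‖ / c := (le_div_iff₀ hc).mpr (by linarith [hcG h hS])
  linarith [norm_le_norm_add_norm_sub' y h, hy h hS rfl]

theorem inexact_fixed_point_iteration_stability_general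
    {V H : Type*} [NormedAddCommGroup V] [InnerProductSpace ℝ V] [CompleteSpace V]
    [NormedAddCommGroup H] [InnerProductSpace ℝ H] [CompleteSpace H]
    (B : V →L[ℝ] V) (α : ℝ) (hα : 0 < α)
    (hB : ∀ v : V, α * ‖v‖ ^ 2 ≤ ⟪B v, v⟫)
    (T : H →L[ℝ] V) (hT : Function.Surjective T)
    (G : H →L[ℝ] H) (hG : G = (ContinuousLinearMap.adjoint T).comp (B.comp T))
    (P : H →L[ℝ] H)
    (hP : ∀ x : H, P x ∈ (LinearMap.ker (T : H →ₗ[ℝ] V))ᗮ ∧ x - P x ∈ LinearMap.ker (T : H →ₗ[ℝ] V))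
    (c : ℝ) (hc : 0 < c) (hcG : ∀ x ∈ (LinearMap.ker (T : H →ₗ[ℝ] V))ᗮ, c * ‖x‖ ≤ ‖G x‖)
    (A₁ : V →L[ℝ] V →L[ℝ] V)
    (G₁ : H → H) (hG₁ : ∀ x : H, G₁ x = ContinuousLinearMap.adjoint T (A₁ (T x) (T x)))
    (lbar : H) (hlbar : lbar ∈ LinearMap.range (ContinuousLinearMap.adjoint T : V →ₗ[ℝ] H))
    (rs : ℝ) (hrs : 0 < rs) (hrs' : rs < c / (2 * ‖T‖ ^ 3 * ‖A₁‖))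
    (L : ℝ) (hL : L = 2 * rs * ‖T‖ ^ 3 * ‖A₁‖ / c)
    (ε : ℕ → ℝ) (hε : ∀ k : ℕ, 0 ≤ ε k)
    (v : ℕ → H) (hv0 : v 0 = 0)
    (hstep : ∀ n : ℕ, ∀ h : H, h ∈ (LinearMap.ker (T : H →ₗ[ℝ] V))ᗮ →
      G h = lbar - G₁ (v n) → ‖P (v (n + 1)) - h‖ ≤ ε (n + 1))
    (hstep0 : ∀ h : H, h ∈ (LinearMap.ker (T : H →ₗ[ℝ] V))ᗮ →
      G h = lbar - G₁ (v 0) → ‖P (v 1) - h‖ ≤ ε 0)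
    (hE : ∀ n : ℕ,
      (∑ k ∈ Finset.Icc 2 (n + 1), ε k) +
      (1 + L) * (∑ h ∈ Finset.range (n - 2), ∑ k ∈ Finset.Icc 3 (n - h),
        ε k * L ^ (n - h - k)) +
      (ε 1 + L * (ε 0 + ‖lbar‖ / c)) * (∑ k ∈ Finset.range n, L ^ k) +
      ε 0 + ‖lbar‖ / c ≤ rs) :
    ∀ n : ℕ, 1 ≤ n → P (v n) ∈ (LinearMap.ker (T : H →ₗ[ℝ] V))ᗮ ∧ ‖P (v n)‖ ≤ rs := by
  subst hG
  set K := ‖T‖ ^ 3 * ‖A₁‖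
  have hK : 0 ≤ K := by positivity
  have hLK : L = 2 * rs * K / c := by rw [hL]; ring
  have hL₀ : 0 ≤ L := by rw [hLK]; positivity
  have hL₁ : L ≤ 1 := by
    rw [show L = rs * (2 * ‖T‖ ^ 3 * ‖A₁‖) / c by rw [hL]; ring]
    exact mul_div_le_one_of_lt_div hc (by positivity) hrs'
  have hsol : ∀ x, ∃ h ∈ (LinearMap.ker (T : H →ₗ[ℝ] V))ᗮ,
      ContinuousLinearMap.adjoint T (B (T h)) = lbar - G₁ x := fun x =>
    T.exists_mem_orthogonal_ker_adjoint_apply_eq hT (B.surjective_of_coercive hα hB)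
      (Submodule.sub_mem _ hlbar ⟨A₁ (T x) (T x), (hG₁ x).symm⟩)
  have hG₁_le : ∀ x, ‖G₁ x‖ ≤ K * ‖P x‖ ^ 2 := fun x => by
    have hTP : T x = T (P x) := by simpa [sub_eq_zero] using (hP x).2
    rw [hG₁, hTP]
    exact T.norm_adjoint_apply_bilin_le A₁ (P x)
  have hbase : ‖P (v 1)‖ ≤ ε 0 + ‖lbar‖ / c := by
    simpa [hG₁, hv0] using norm_le_add_div_of_forall_norm_sub_le hc hcG (hsol (v 0)) hstep0
  have hnext : ∀ n, ‖P (v (n + 1))‖ ≤ rs →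
      ‖P (v (n + 2))‖ ≤ ε (n + 2) + ‖lbar‖ / c + L * ‖P (v (n + 1))‖ := fun n ha =>
    calc ‖P (v (n + 2))‖ ≤ ε (n + 2) + ‖lbar - G₁ (v (n + 1))‖ / c :=
          norm_le_add_div_of_forall_norm_sub_le hc hcG (hsol _) (hstep (n + 1))
      _ ≤ ε (n + 2) + (‖lbar‖ + K * ‖P (v (n + 1))‖ ^ 2) / c := by
          gcongr; exact (norm_sub_le _ _).trans (by gcongr; exact hG₁_le _)
      _ ≤ ε (n + 2) + ‖lbar‖ / c + L * ‖P (v (n + 1))‖ := by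
          rw [hLK, add_assoc]; gcongr; exact add_mul_sq_div_le hK hc.le (norm_nonneg _) ha
  intro n hn
  obtain ⟨m, rfl⟩ := Nat.exists_eq_add_of_le' hn
  refine ⟨(hP _).1, (le_of_step_le_of_le_step (a := fun m => ‖P (v (m + 1))‖) hL₀ hE
    (add_mul_accumulatedPerturbation_le hε hL₀ hL₁ _) ?_ hnext m).trans (hE m)⟩
  simpa [accumulatedPerturbation_zero] using hbase

/-- Stability of the inexact fixed point iteration: if all accumulated perturbation
bounds `ℰ_n` stay below `r*`, then all projected iterates `P v_n` remain in the ball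
`𝐁_{r*}` of `Ran G = (ker T)ᗮ`. -/
theorem inexact_fixed_point_iteration_stability
    {V H : Type*} [NormedAddCommGroup V] [InnerProductSpace ℝ V] [CompleteSpace V]
    [NormedAddCommGroup H] [InnerProductSpace ℝ H] [CompleteSpace H]
    (B : V →L[ℝ] V) (α : ℝ) (hα : 0 < α)
    (hB : ∀ v : V, α * ‖v‖ ^ 2 ≤ ⟪B v, v⟫)
    (T : H →L[ℝ] V) (hT : Function.Surjective T)
    (G : H →L[ℝ] H) (hG : G = (ContinuousLinearMap.adjoint T).comp (B.comp T))
    (P : H →L[ℝ] H)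
    (hP : ∀ x : H, P x ∈ (LinearMap.ker (T : H →ₗ[ℝ] V))ᗮ ∧ x - P x ∈ LinearMap.ker (T : H →ₗ[ℝ] V))
    (c : ℝ) (hc : 0 < c) (hcG : ∀ x ∈ (LinearMap.ker (T : H →ₗ[ℝ] V))ᗮ, c * ‖x‖ ≤ ‖G x‖)
    (A₁ : V →L[ℝ] V →L[ℝ] V) (hA₁ : ‖A₁‖ ≠ 0)
    (G₁ : H → H) (hG₁ : ∀ x : H, G₁ x = ContinuousLinearMap.adjoint T (A₁ (T x) (T x)))
    (lbar : H) (hlbar : lbar ∈ LinearMap.range (ContinuousLinearMap.adjoint T : V →ₗ[ℝ] H))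
    (hl : ‖lbar‖ < c ^ 2 / (4 * ‖T‖ ^ 3 * ‖A₁‖))
    (rs : ℝ) (hrs : 0 < rs) (hrs' : rs < c / (2 * ‖T‖ ^ 3 * ‖A₁‖))
    (L : ℝ) (hL : L = 2 * rs * ‖T‖ ^ 3 * ‖A₁‖ / c)
    (ε : ℕ → ℝ) (hε : ∀ k : ℕ, 0 ≤ ε k)
    (v : ℕ → H) (hv0 : v 0 = 0)
    (hstep : ∀ n : ℕ, ∀ h : H, h ∈ (LinearMap.ker (T : H →ₗ[ℝ] V))ᗮ →
      G h = lbar - G₁ (v n) → ‖P (v (n + 1)) - h‖ ≤ ε (n + 1))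
    (hstep0 : ∀ h : H, h ∈ (LinearMap.ker (T : H →ₗ[ℝ] V))ᗮ →
      G h = lbar - G₁ (v 0) → ‖P (v 1) - h‖ ≤ ε 0)
    (hE : ∀ n : ℕ,
      (∑ k ∈ Finset.Icc 2 (n + 1), ε k) +
      (1 + L) * (∑ h ∈ Finset.range (n - 2), ∑ k ∈ Finset.Icc 3 (n - h),
        ε k * L ^ (n - h - k)) +
      (ε 1 + L * (ε 0 + ‖lbar‖ / c)) * (∑ k ∈ Finset.range n, L ^ k) +
      ε 0 + ‖lbar‖ / c ≤ rs) :
    ∀ n : ℕ, 1 ≤ n → P (v n) ∈ (LinearMap.ker (T : H →ₗ[ℝ] V))ᗮ ∧ ‖P (v n)‖ ≤ rs :=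
  inexact_fixed_point_iteration_stability_general B α hα hB T hT G hG P hP c hc hcG A₁ G₁ hG₁ lbar
    hlbar rs hrs hrs' L hL ε hε v hv0 hstep hstep0 hE
end

section
/- (Recovery of the continuous solution from the adaptive iterates.) Suppose ‖l̄‖ < c²/(4‖T‖³‖A₁‖) and additionally that l̄ = T* ℓ for some ℓ ∈ V; let ū ∈ (ker T)⊥ satisfy G ū + G₁(ū) = l̄. Then u := T ū ∈ V satisfies B u + A₁(u,u) = ℓ, i.e. u solves the original variational fixed point problem. Moreover, for every v ∈ H one has ‖u − T v‖ ≤ ‖T‖·‖P(ū − v)‖; consequently, for any sequence (v_n) in H with P v_n → ū in H (as produced by the routine FIXPT), the functions T v_n = Σ_λ (D_V⁻¹ v_n)_λ f_λ converge to u in V. -/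
/-!
Applying `T*` to `B u + A₁(u,u) - ℓ` with `u = T ū` gives `G ū + G₁(ū) - l̄ = 0`, and `T*` is
injective since `ker T* = (ran T)ᗮ = 0` for surjective `T`. Since `P x` differs from `x` by an
element of `ker T`, `T ∘ P = T`, which gives both the error bound and the convergence.
-/

open scoped RealInnerProductSpace
open Filter Topology

theorem ContinuousLinearMap.adjoint_injective_of_surjective {𝕜 E F : Type*} [RCLike 𝕜]
    [NormedAddCommGroup E] [InnerProductSpace 𝕜 E] [CompleteSpace E]
    [NormedAddCommGroup F] [InnerProductSpace 𝕜 F] [CompleteSpace F]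
    {T : E →L[𝕜] F} (hT : Function.Surjective T) : Function.Injective (adjoint T) := by
  have hker : (adjoint T).ker = ⊥ := by
    rw [← orthogonal_range, LinearMap.range_eq_top.mpr hT, Submodule.top_orthogonal_eq_bot]
  exact LinearMap.ker_eq_bot.mp hker

theorem LinearMap.map_eq_of_sub_mem_ker {R M N : Type*} [Ring R] [AddCommGroup M] [Module R M]
    [AddCommGroup N] [Module R N] {T : M →ₗ[R] N} {P : M → M}
    (hP : ∀ x, x - P x ∈ LinearMap.ker T) (x : M) : T (P x) = T x :=
  (LinearMap.sub_mem_ker_iff.mp (hP x)).symm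

theorem recovery_of_continuous_solution_from_fixpt_general
    {V H : Type*} [NormedAddCommGroup V] [InnerProductSpace ℝ V] [CompleteSpace V]
    [NormedAddCommGroup H] [InnerProductSpace ℝ H] [CompleteSpace H]
    (B : V →L[ℝ] V)
    (T : H →L[ℝ] V) (hT : Function.Surjective T)
    (G : H →L[ℝ] H) (hG : G = (ContinuousLinearMap.adjoint T).comp (B.comp T))
    (P : H →L[ℝ] H)
    (hP : ∀ x : H, P x ∈ (LinearMap.ker (T : H →ₗ[ℝ] V))ᗮ ∧ x - P x ∈ LinearMap.ker (T : H →ₗ[ℝ] V))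
    (A₁ : V →L[ℝ] V →L[ℝ] V)
    (G₁ : H → H) (hG₁ : ∀ x : H, G₁ x = ContinuousLinearMap.adjoint T (A₁ (T x) (T x)))
    (lbar : H)
    (ℓ : V) (hℓ : ContinuousLinearMap.adjoint T ℓ = lbar)
    (ubar : H)
    (hubar : G ubar + G₁ ubar = lbar) :
    B (T ubar) + A₁ (T ubar) (T ubar) = ℓ ∧
    (∀ v : H, ‖T ubar - T v‖ ≤ ‖T‖ * ‖P (ubar - v)‖) ∧
    (∀ vseq : ℕ → H, Tendsto (fun n : ℕ => P (vseq n)) atTop (𝓝 ubar) →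
      Tendsto (fun n : ℕ => T (vseq n)) atTop (𝓝 (T ubar))) := by
  have hTP : ∀ x, T (P x) = T x :=
    LinearMap.map_eq_of_sub_mem_ker (T := (T : H →ₗ[ℝ] V)) fun x => (hP x).2
  refine ⟨ContinuousLinearMap.adjoint_injective_of_surjective hT ?_, fun v => ?_,
    fun vseq hv => ?_⟩
  · rw [hℓ, ← hubar, hG, hG₁, map_add, ContinuousLinearMap.comp_apply,
      ContinuousLinearMap.comp_apply]
  · calc ‖T ubar - T v‖ = ‖T (P (ubar - v))‖ := by rw [hTP, map_sub]
      _ ≤ ‖T‖ * ‖P (ubar - v)‖ := T.le_opNorm _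
  · simpa only [Function.comp_def, hTP] using (T.continuous.tendsto ubar).comp hv

/-- Recovery of the continuous solution from the adaptive iterates: if
`ū ∈ Ran G = (ker T)ᗮ` solves the discrete nonlinear problem `G ū + G₁(ū) = T* ℓ`,
then `u = T ū` solves `B u + A₁(u,u) = ℓ`, one has
`‖u − T v‖ ≤ ‖T‖ ‖P(ū − v)‖` for all `v`, and `T v_n → u` in `V` whenever
`P v_n → ū` in `H`. -/
theorem recovery_of_continuous_solution_from_fixpt
    {V H : Type*} [NormedAddCommGroup V] [InnerProductSpace ℝ V] [CompleteSpace V]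
    [NormedAddCommGroup H] [InnerProductSpace ℝ H] [CompleteSpace H]
    (B : V →L[ℝ] V) (α : ℝ) (hα : 0 < α)
    (hB : ∀ v : V, α * ‖v‖ ^ 2 ≤ ⟪B v, v⟫)
    (T : H →L[ℝ] V) (hT : Function.Surjective T)
    (G : H →L[ℝ] H) (hG : G = (ContinuousLinearMap.adjoint T).comp (B.comp T))
    (P : H →L[ℝ] H)
    (hP : ∀ x : H, P x ∈ (LinearMap.ker (T : H →ₗ[ℝ] V))ᗮ ∧ x - P x ∈ LinearMap.ker (T : H →ₗ[ℝ] V))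
    (c : ℝ) (hc : 0 < c) (hcG : ∀ x ∈ (LinearMap.ker (T : H →ₗ[ℝ] V))ᗮ, c * ‖x‖ ≤ ‖G x‖)
    (A₁ : V →L[ℝ] V →L[ℝ] V) (hA₁ : ‖A₁‖ ≠ 0)
    (G₁ : H → H) (hG₁ : ∀ x : H, G₁ x = ContinuousLinearMap.adjoint T (A₁ (T x) (T x)))
    (lbar : H) (hl : ‖lbar‖ < c ^ 2 / (4 * ‖T‖ ^ 3 * ‖A₁‖))
    (ℓ : V) (hℓ : ContinuousLinearMap.adjoint T ℓ = lbar)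
    (ubar : H) (hubarmem : ubar ∈ (LinearMap.ker (T : H →ₗ[ℝ] V))ᗮ)
    (hubar : G ubar + G₁ ubar = lbar) :
    B (T ubar) + A₁ (T ubar) (T ubar) = ℓ ∧
    (∀ v : H, ‖T ubar - T v‖ ≤ ‖T‖ * ‖P (ubar - v)‖) ∧
    (∀ vseq : ℕ → H, Tendsto (fun n : ℕ => P (vseq n)) atTop (𝓝 ubar) →
      Tendsto (fun n : ℕ => T (vseq n)) atTop (𝓝 (T ubar))) :=
  recovery_of_continuous_solution_from_fixpt_general B T hT G hG P hP A₁ G₁ hG₁ lbar ℓ hℓ ubar hubar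
end
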